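/- Let s be a Hadamard matrix of order 4k with k > 1 odd and s_{i,1} = 1 for all i. Then for all pairwise distinct column indices i, j, m, all different from 1, the integer N_{ij}^m := (1/4) Σ_{l=1}^{4k} s_{li} s_{lj} s_{lm} is odd and satisfies −k+2 ≤ N_{ij}^m ≤ k−2; in particular N_{ij}^m ≠ 0. -/
import Mathlib

open scoped BigOperators
open Matrix

section Aux

variable {k : ℕ}

/-- Column orthogonality from row orthogonality. -/
lemma had_col_orth (k : ℕ) (hk : 0 < k)
    (s : Matrix (Fin (4 * k)) (Fin (4 * k)) ℤ)
    (hH : s * s.transpose = (4 * (k : ℤ)) • 1) :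
    ∀ a b : Fin (4 * k), a ≠ b → ∑ l, s l a * s l b = 0 := by
  intro a b hab
  set f := (Int.castRingHom ℚ)
  set Q : Matrix (Fin (4 * k)) (Fin (4 * k)) ℚ := s.map f with hQdef
  have hc : (4 * (k : ℚ)) ≠ 0 := by positivity
  have hh : ∀ x y, ∑ l, s x l * s y l = if x = y then 4 * (k : ℤ) else 0 := by
    intro x y
    have := congrFun (congrFun hH x) y
    rw [Matrix.mul_apply] at this
    simpa [Matrix.transpose_apply, Matrix.smul_apply, Matrix.one_apply, apply_ite] using this
  have hQ : Q * Qᵀ = (4 * (k : ℚ)) • 1 := by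
    ext x y
    have entry : (Q * Qᵀ) x y = ((∑ l, s x l * s y l : ℤ) : ℚ) := by
      rw [Matrix.mul_apply]
      push_cast
      simp [hQdef, Matrix.map_apply, Matrix.transpose_apply]
    rw [entry, hh]
    by_cases hxy : x = y <;>
      simp [hxy, Matrix.smul_apply, Matrix.one_apply]
  have h1 : Q * ((4 * (k : ℚ))⁻¹ • Qᵀ) = 1 := by
    rw [Matrix.mul_smul, hQ, smul_smul, inv_mul_cancel₀ hc, one_smul]
  have h2 : ((4 * (k : ℚ))⁻¹ • Qᵀ) * Q = 1 := mul_eq_one_comm.mp h1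
  have h3 : Qᵀ * Q = (4 * (k : ℚ)) • 1 := by
    rw [Matrix.smul_mul] at h2
    calc Qᵀ * Q = (4 * (k : ℚ)) • ((4 * (k : ℚ))⁻¹ • (Qᵀ * Q)) := by
          rw [smul_smul, mul_inv_cancel₀ hc, one_smul]
      _ = (4 * (k : ℚ)) • 1 := by rw [h2]
  have h4 : ∑ l, ((s l a : ℚ)) * s l b = 0 := by
    have h5 := congrFun (congrFun h3 a) b
    rw [Matrix.mul_apply, Matrix.smul_apply, Matrix.one_apply_ne hab, smul_zero] at h5
    rw [← h5]
    apply Finset.sum_congr rfl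
    intro l _
    simp [hQdef, Matrix.map_apply, Matrix.transpose_apply, mul_comm]
  have : ((∑ l, s l a * s l b : ℤ) : ℚ) = 0 := by push_cast; exact h4
  exact_mod_cast this

/-- Divisibility: `8 ∣ 4k + ∑ s_a s_b s_c` for distinct columns away from the
all-ones column. -/
lemma had_div (k : ℕ)
    (s : Matrix (Fin (4 * k)) (Fin (4 * k)) ℤ)
    (hpm : ∀ i j, s i j = 1 ∨ s i j = -1)
    (horth : ∀ a b : Fin (4 * k), a ≠ b → ∑ l, s l a * s l b = 0)
    (z : Fin (4 * k)) (hz : ∀ l, s l z = 1)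
    (a b c : Fin (4 * k)) (hab : a ≠ b) (hac : a ≠ c) (hbc : b ≠ c)
    (haz : a ≠ z) (hbz : b ≠ z) (hcz : c ≠ z) :
    (8 : ℤ) ∣ 4 * (k : ℤ) + ∑ l, s l a * s l b * s l c := by
  have hsingle : ∀ x : Fin (4 * k), x ≠ z → ∑ l, s l x = 0 := by
    intro x hx
    have := horth x z hx
    simpa [hz] using this
  have hexp : ∑ l, (1 + s l a) * (1 + s l b) * (1 + s l c)
      = (∑ _l : Fin (4 * k), (1 : ℤ)) + ((∑ l, s l a) + (∑ l, s l b) + (∑ l, s l c))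
        + ((∑ l, s l a * s l b) + (∑ l, s l a * s l c) + (∑ l, s l b * s l c))
        + ∑ l, s l a * s l b * s l c := by
    simp only [← Finset.sum_add_distrib]
    apply Finset.sum_congr rfl
    intro l _
    ring
  have hval : ∑ l, (1 + s l a) * (1 + s l b) * (1 + s l c)
      = 4 * (k : ℤ) + ∑ l, s l a * s l b * s l c := by
    rw [hexp, hsingle a haz, hsingle b hbz, hsingle c hcz,
      horth a b hab, horth a c hac, horth b c hbc]
    simp [Finset.card_univ]
    try ring
  rw [← hval]
  apply Finset.dvd_sum
  intro l _
  rcases hpm l a with h1 | h1 <;> rcases hpm l b with h2 | h2 <;>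
    rcases hpm l c with h3 | h3 <;> simp [h1, h2, h3]

end Aux

/-- Let `s` be a Hadamard matrix of order `4k` with `k > 1`
odd and first column all ones.  For pairwise distinct column indices
`i, j, m`, all different from the first one, the integer
`N_{ij}^m = (1/4) ∑ l, s l i * s l j * s l m` is odd and satisfies
`−k+2 ≤ N_{ij}^m ≤ k−2`; in particular `N_{ij}^m ≠ 0`. -/
theorem hadamard_structure_constants_odd_k
    (k : ℕ) (hk : 1 < k) (hodd : Odd k)
    (s : Matrix (Fin (4 * k)) (Fin (4 * k)) ℤ)
    (hpm : ∀ i j, s i j = 1 ∨ s i j = -1)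
    (hH : s * s.transpose = (4 * (k : ℤ)) • 1)
    (h1 : ∀ i, s i ⟨0, by omega⟩ = 1)
    (i j m : Fin (4 * k))
    (hij : i ≠ j) (him : i ≠ m) (hjm : j ≠ m)
    (hi : i ≠ ⟨0, by omega⟩) (hj : j ≠ ⟨0, by omega⟩) (hm : m ≠ ⟨0, by omega⟩) :
    Odd ((∑ l, s l i * s l j * s l m) / 4) ∧
    -(k : ℤ) + 2 ≤ (∑ l, s l i * s l j * s l m) / 4 ∧
    (∑ l, s l i * s l j * s l m) / 4 ≤ (k : ℤ) - 2 ∧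
    (∑ l, s l i * s l j * s l m) / 4 ≠ 0 := by
  have hk0 : 0 < k := by omega
  set z : Fin (4 * k) := ⟨0, by omega⟩ with hzdef
  have horth := had_col_orth k hk0 s hH
  set T : ℤ := ∑ l, s l i * s l j * s l m with hT
  have hdiv : (8 : ℤ) ∣ 4 * (k : ℤ) + T :=
    had_div k s hpm horth z h1 i j m hij him hjm hi hj hm
  -- bounds on T
  have hub : T ≤ 4 * (k : ℤ) := by
    calc T ≤ ∑ _l : Fin (4 * k), (1 : ℤ) := by
          apply Finset.sum_le_sum
          intro l _
          rcases hpm l i with h1 | h1 <;> rcases hpm l j with h2 | h2 <;>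
            rcases hpm l m with h3 | h3 <;> simp [h1, h2, h3]
      _ = 4 * (k : ℤ) := by simp [Finset.card_univ]; try ring
  have hlb : -(4 * (k : ℤ)) ≤ T := by
    have : ∑ _l : Fin (4 * k), (-1 : ℤ) ≤ T := by
      apply Finset.sum_le_sum
      intro l _
      rcases hpm l i with h1 | h1 <;> rcases hpm l j with h2 | h2 <;>
        rcases hpm l m with h3 | h3 <;> simp [h1, h2, h3]
    calc -(4 * (k : ℤ)) = ∑ _l : Fin (4 * k), (-1 : ℤ) := by
          simp [Finset.card_univ]; try ring
      _ ≤ T := this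
  -- a fourth column
  obtain ⟨p, hp⟩ : ∃ p : Fin (4 * k), p ∉ ({z, i, j, m} : Finset (Fin (4 * k))) := by
    by_contra hcon
    push_neg at hcon
    have huniv : (Finset.univ : Finset (Fin (4 * k))) ⊆ {z, i, j, m} :=
      fun x _ => hcon x
    have hcard := Finset.card_le_card huniv
    have h4 : ({z, i, j, m} : Finset (Fin (4 * k))).card ≤ 4 := by
      apply le_trans (Finset.card_insert_le _ _)
      have : ({i, j, m} : Finset (Fin (4 * k))).card ≤ 3 := by
        apply le_trans (Finset.card_insert_le _ _)
        have : ({j, m} : Finset (Fin (4 * k))).card ≤ 2 := by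
          apply le_trans (Finset.card_insert_le _ _)
          simp
        omega
      omega
    simp [Finset.card_univ] at hcard
    omega
  simp only [Finset.mem_insert, Finset.mem_singleton, not_or] at hp
  obtain ⟨hpz, hpi, hpj, hpm'⟩ := hp
  -- extreme values are impossible
  have hextreme : ∀ e : ℤ, (e = 1 ∨ e = -1) →
      (∀ l, s l i * s l j = e * s l m) → False := by
    intro e he hsq
    have hdiv' : (8 : ℤ) ∣ 4 * (k : ℤ) + ∑ l, s l i * s l j * s l p :=
      had_div k s hpm horth z h1 i j p hij (Ne.symm hpi) (Ne.symm hpj)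
        hi hj hpz
    have hzero : ∑ l, s l i * s l j * s l p = 0 := by
      have : ∑ l, s l i * s l j * s l p = e * ∑ l, s l m * s l p := by
        rw [Finset.mul_sum]
        apply Finset.sum_congr rfl
        intro l _
        rw [hsq l]
        ring
      rw [this, horth m p (fun h => hpm' h.symm), mul_zero]
    rw [hzero, add_zero] at hdiv'
    obtain ⟨c, hc⟩ := hdiv'
    have hkeven : Even (k : ℤ) := ⟨c, by omega⟩
    rw [Int.even_coe_nat] at hkeven
    exact (Nat.not_even_iff_odd.mpr hodd) hkeven
  have hsm : ∀ l, s l m * s l m = 1 := by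
    intro l
    rcases hpm l m with h | h <;> simp [h]
  have hne_top : T ≠ 4 * (k : ℤ) := by
    intro htop
    refine hextreme 1 (Or.inl rfl) ?_
    intro l
    have hsum0 : ∑ l, (1 - s l i * s l j * s l m) = 0 := by
      rw [Finset.sum_sub_distrib, ← hT, htop]
      simp [Finset.card_univ]
      try ring
    have hall := (Finset.sum_eq_zero_iff_of_nonneg ?_).mp hsum0 l (Finset.mem_univ l)
    · have h1' : s l i * s l j * s l m = 1 := by linarith
      have := congrArg (· * s l m) h1'
      simp only [one_mul] at this
      rw [mul_assoc, hsm l, mul_one] at this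
      rw [this]; ring
    · intro l _
      rcases hpm l i with h1 | h1 <;> rcases hpm l j with h2 | h2 <;>
        rcases hpm l m with h3 | h3 <;> simp [h1, h2, h3]
  have hne_bot : T ≠ -(4 * (k : ℤ)) := by
    intro hbot
    refine hextreme (-1) (Or.inr rfl) ?_
    intro l
    have hsum0 : ∑ l, (1 + s l i * s l j * s l m) = 0 := by
      rw [Finset.sum_add_distrib, ← hT, hbot]
      simp [Finset.card_univ]
      try ring
    have hall := (Finset.sum_eq_zero_iff_of_nonneg ?_).mp hsum0 l (Finset.mem_univ l)
    · have h1' : s l i * s l j * s l m = -1 := by linarith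
      have := congrArg (· * s l m) h1'
      rw [mul_assoc, hsm l, mul_one] at this
      rw [this]; try ring
    · intro l _
      rcases hpm l i with h1 | h1 <;> rcases hpm l j with h2 | h2 <;>
        rcases hpm l m with h3 | h3 <;> simp [h1, h2, h3]
  obtain ⟨c, hc⟩ := hdiv
  have hTval : T = 8 * c - 4 * (k : ℤ) := by omega
  have hc1 : 1 ≤ c := by omega
  have hck : c ≤ (k : ℤ) - 1 := by omega
  have hdiv4 : T / 4 = 2 * c - (k : ℤ) := by
    rw [hTval]
    have : 8 * c - 4 * (k : ℤ) = 4 * (2 * c - (k : ℤ)) := by ring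
    rw [this, Int.mul_ediv_cancel_left _ (by norm_num)]
  obtain ⟨t, ht⟩ := hodd
  refine ⟨?_, ?_, ?_, ?_⟩
  · rw [hdiv4]
    exact ⟨c - t - 1, by push_cast [ht]; ring⟩
  · rw [hdiv4]; omega
  · rw [hdiv4]; omega
  · rw [hdiv4]
    have : (k : ℤ) = 2 * t + 1 := by push_cast [ht]; ring
    omega
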